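/- arXiv:2003.09951 — 12 statements merged into one kernel-verified Lean document; each statement's English description precedes it below -/
import Mathlib

section
/- Let q ≥ 2 be an integer and a an integer with a² ≤ 4q, and let α, β ∈ ℂ be the two roots of x² − ax + q. Then α/β is a root of unity if and only if a² ∈ {0, q, 2q, 3q, 4q}; moreover, the multiplicative order of α/β equals 1, 2, 3, 4, or 6 according as a² = 4q, a² = 0, a² = q, a² = 2q, or a² = 3q. -/
/-!
The ratio `z = α / β` satisfies `z + z⁻¹ = a² / q - 2`, a rational number in `[-2, 2]`.
If `z` is a root of unity then `z + z⁻¹` is an algebraic integer, hence an integer, which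
forces `a² ∈ {0, q, 2q, 3q, 4q}`. Conversely, for `z + z⁻¹ = t ∈ {2, -2, -1, 0, 1}` the
relation `z² - t z + 1 = 0` says that `z` is a root of `Φ₁²`, `Φ₂²`, `Φ₃`, `Φ₄` or `Φ₆`.
-/

section OrderOfQuadratic

variable {R : Type*} [CommRing R] {z : R}

theorem orderOf_eq_one_of_sq_sub_two_mul_add_one_eq_zero [NoZeroDivisors R]
    (hz : z ^ 2 - 2 * z + 1 = 0) : orderOf z = 1 :=
  orderOf_eq_one_iff.mpr <| sub_eq_zero.mp <|
    pow_eq_zero_iff two_ne_zero |>.mp (by linear_combination hz)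

theorem orderOf_eq_two_of_sq_add_two_mul_add_one_eq_zero [CharZero R] [NoZeroDivisors R]
    (hz : z ^ 2 + 2 * z + 1 = 0) : orderOf z = 2 := by
  have hz1 : z = -1 := eq_neg_of_add_eq_zero_left <|
    pow_eq_zero_iff two_ne_zero |>.mp (by linear_combination hz)
  rw [hz1]
  exact orderOf_eq_prime (by norm_num) (by norm_num)

theorem orderOf_eq_three_of_sq_add_add_one_eq_zero [CharZero R]
    (hz : z ^ 2 + z + 1 = 0) : orderOf z = 3 := by
  refine orderOf_eq_prime (by linear_combination (z - 1) * hz) fun h => ?_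
  rw [h] at hz
  norm_num at hz

theorem orderOf_eq_four_of_sq_eq_neg_one [CharZero R] (hz : z ^ 2 = -1) : orderOf z = 4 :=
  orderOf_eq_prime_pow (p := 2) (n := 1) (by norm_num [hz])
    (by rw [show 2 ^ (1 + 1) = 2 * 2 by rfl, pow_mul, hz]; norm_num)

theorem orderOf_eq_six_of_sq_sub_add_one_eq_zero [CharZero R]
    (hz : z ^ 2 - z + 1 = 0) : orderOf z = 6 := by
  have h3 : orderOf (-z) = 3 :=
    orderOf_eq_three_of_sq_add_add_one_eq_zero (by linear_combination hz)
  have h2 : orderOf (-1 : R) = 2 := orderOf_eq_prime (by norm_num) (by norm_num)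
  rw [← neg_neg z, neg_eq_neg_one_mul, (Commute.all _ _).orderOf_mul_eq_mul_orderOf_of_coprime]
  all_goals norm_num [h2, h3]

end OrderOfQuadratic

section Trace

variable {K : Type*} [Field K]

theorem div_add_div_eq_sq_div_sub_two {α β s p : K} (hp : p ≠ 0)
    (hs : α + β = s) (hαβ : α * β = p) : α / β + β / α = s ^ 2 / p - 2 := by
  have hα : α ≠ 0 := left_ne_zero_of_mul (hαβ ▸ hp)
  have hβ : β ≠ 0 := right_ne_zero_of_mul (hαβ ▸ hp)
  rw [← hs, ← hαβ]
  field_simp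
  ring

theorem sq_sub_mul_add_one_eq_zero_of_add_inv_eq {z t : K} (hz : z ≠ 0) (ht : z + z⁻¹ = t) :
    z ^ 2 - t * z + 1 = 0 := by
  rw [← ht]
  field_simp
  ring

theorem IsOfFinOrder.isIntegral_add_inv {z : K} (hz : IsOfFinOrder z) :
    IsIntegral ℤ (z + z⁻¹) := by
  obtain ⟨k, hk, hzk⟩ := isOfFinOrder_iff_pow_eq_one.mp hz
  have hint : ∀ w : K, w ^ k = 1 → IsIntegral ℤ w := fun w hw =>
    IsIntegral.of_pow hk (hw ▸ isIntegral_one)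
  exact (hint z hzk).add (hint z⁻¹ (by rw [inv_pow, hzk, inv_one]))

theorem Rat.exists_intCast_eq_of_isIntegral_cast [CharZero K] {r : ℚ}
    (hr : IsIntegral ℤ (r : K)) : ∃ n : ℤ, (n : ℚ) = r :=
  IsIntegrallyClosed.isIntegral_iff.mp <|
    (isIntegral_algHom_iff (algebraMap ℚ K).toIntAlgHom (algebraMap ℚ K).injective).mp hr

end Trace

theorem Int.sq_mem_of_sq_eq_mul {q a m : ℤ} (hq : 0 < q) (ha : a ^ 2 ≤ 4 * q)
    (hm : a ^ 2 = m * q) : a ^ 2 ∈ ({0, q, 2 * q, 3 * q, 4 * q} : Set ℤ) := by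
  have h0 : 0 ≤ m := by nlinarith [sq_nonneg a]
  have h4 : m ≤ 4 := by nlinarith
  interval_cases m <;> simp [hm]

theorem Int.sq_mem_of_isOfFinOrder {K : Type*} [Field K] [CharZero K] {q a : ℤ} (hq : 0 < q)
    (ha : a ^ 2 ≤ 4 * q) {z : K} (hz : IsOfFinOrder z)
    (htrace : z + z⁻¹ = ((a ^ 2 / q - 2 : ℚ) : K)) :
    a ^ 2 ∈ ({0, q, 2 * q, 3 * q, 4 * q} : Set ℤ) := by
  obtain ⟨n, hn⟩ := Rat.exists_intCast_eq_of_isIntegral_cast (htrace ▸ hz.isIntegral_add_inv)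
  refine Int.sq_mem_of_sq_eq_mul hq ha (m := n + 2) ?_
  rw [eq_sub_iff_add_eq, eq_div_iff (by exact_mod_cast hq.ne')] at hn
  exact_mod_cast hn.symm

theorem root_of_unity_classification
    (q a : ℤ) (hq : 2 ≤ q) (ha : a ^ 2 ≤ 4 * q)
    (α β : ℂ) (hsum : α + β = (a : ℂ)) (hprod : α * β = (q : ℂ)) :
    ((∃ k : ℕ, 0 < k ∧ (α / β) ^ k = 1) ↔
      a ^ 2 ∈ ({0, q, 2 * q, 3 * q, 4 * q} : Set ℤ)) ∧
    (a ^ 2 = 4 * q → orderOf (α / β) = 1) ∧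
    (a ^ 2 = 0 → orderOf (α / β) = 2) ∧
    (a ^ 2 = q → orderOf (α / β) = 3) ∧
    (a ^ 2 = 2 * q → orderOf (α / β) = 4) ∧
    (a ^ 2 = 3 * q → orderOf (α / β) = 6) := by
  have hq0 : (q : ℂ) ≠ 0 := by exact_mod_cast (by omega : q ≠ 0)
  have hz : α / β ≠ 0 :=
    div_ne_zero (left_ne_zero_of_mul (hprod ▸ hq0)) (right_ne_zero_of_mul (hprod ▸ hq0))
  have htrace : α / β + (α / β)⁻¹ = ((a ^ 2 / q - 2 : ℚ) : ℂ) := by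
    rw [inv_div, div_add_div_eq_sq_div_sub_two hq0 hsum hprod]
    push_cast; rfl
  generalize α / β = z at hz htrace ⊢
  have hquad (m : ℤ) (hm : a ^ 2 = m * q) : z ^ 2 - (m - 2) * z + 1 = 0 := by
    have hm' : (a : ℂ) ^ 2 = m * q := by exact_mod_cast hm
    refine sq_sub_mul_add_one_eq_zero_of_add_inv_eq hz ?_
    rw [htrace]; push_cast; rw [hm']; field_simp
  have o1 : a ^ 2 = 4 * q → orderOf z = 1 := fun h =>
    orderOf_eq_one_of_sq_sub_two_mul_add_one_eq_zero (by linear_combination hquad 4 h)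
  have o2 : a ^ 2 = 0 → orderOf z = 2 := fun h =>
    orderOf_eq_two_of_sq_add_two_mul_add_one_eq_zero
      (by linear_combination hquad 0 (by simpa using h))
  have o3 : a ^ 2 = q → orderOf z = 3 := fun h =>
    orderOf_eq_three_of_sq_add_add_one_eq_zero (by linear_combination hquad 1 (by simpa using h))
  have o4 : a ^ 2 = 2 * q → orderOf z = 4 := fun h =>
    orderOf_eq_four_of_sq_eq_neg_one (by linear_combination hquad 2 h)
  have o6 : a ^ 2 = 3 * q → orderOf z = 6 := fun h =>
    orderOf_eq_six_of_sq_sub_add_one_eq_zero (by linear_combination hquad 3 h)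
  refine ⟨?_, o1, o2, o3, o4, o6⟩
  rw [← isOfFinOrder_iff_pow_eq_one]
  refine ⟨fun hfin => Int.sq_mem_of_isOfFinOrder (by omega) ha hfin htrace, ?_⟩
  rintro (h | h | h | h | h) <;> refine orderOf_pos_iff.mp ?_
  exacts [by simp [o2 h], by simp [o3 h], by simp [o4 h], by simp [o6 h], by simp [o1 h]]
end

section
/- Let q ≥ 2 be a prime power and a an integer with a² ≤ 4q, and let α, β ∈ ℂ be the two roots of x² − ax + q. Suppose α/β is a primitive m-th root of unity. Then for every positive integer n divisible by m, there exists a nonnegative integer u with q^n + 1 − (α^n + β^n) = u². -/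
/-!
Since `(α / β) ^ n = 1` we have `α ^ n = β ^ n`, so `s = α ^ n + β ^ n`, an integer by the
recurrence `sₖ₊₂ = a sₖ₊₁ - q sₖ`, satisfies `s ^ 2 = 4 (α β) ^ n = 4 q ^ n`. Hence `s = 2 t`
with `t ^ 2 = q ^ n`, and `q ^ n + 1 - s = (t - 1) ^ 2`.
-/

def powerSumSeq (a q : ℤ) : ℕ → ℤ
  | 0 => 2
  | 1 => a
  | n + 2 => a * powerSumSeq a q (n + 1) - q * powerSumSeq a q n

theorem pow_add_pow_eq_powerSumSeq {R : Type*} [CommRing R] {a q : ℤ} {α β : R}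
    (hsum : α + β = a) (hprod : α * β = q) (n : ℕ) :
    α ^ n + β ^ n = powerSumSeq a q n := by
  induction n using Nat.twoStepInduction with
  | zero => norm_num [powerSumSeq, one_add_one_eq_two]
  | one => simpa [powerSumSeq] using hsum
  | more n ih ih' =>
    calc α ^ (n + 2) + β ^ (n + 2)
        = (α + β) * (α ^ (n + 1) + β ^ (n + 1)) - α * β * (α ^ n + β ^ n) := by ring
      _ = powerSumSeq a q (n + 2) := by
        rw [hsum, hprod, ih, ih', powerSumSeq]; push_cast; ring

theorem pow_eq_pow_of_div_pow_eq_one {G₀ : Type*} [CommGroupWithZero G₀] {x y : G₀} {n : ℕ}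
    (h : (x / y) ^ n = 1) : x ^ n = y ^ n := by
  rw [div_pow] at h
  have hy : y ^ n ≠ 0 := fun hy ↦ by simp [hy] at h
  exact (div_eq_one_iff_eq hy).1 h

theorem Int.exists_add_one_sub_eq_sq_of_sq_eq_four_mul {s Q : ℤ} (h : s ^ 2 = 4 * Q) :
    ∃ u : ℕ, Q + 1 - s = (u : ℤ) ^ 2 := by
  have hsq_even : Even (s ^ 2) := ⟨2 * Q, by rw [h]; ring⟩
  obtain ⟨t, rfl⟩ := (Int.even_pow.mp hsq_even).1
  have hQ : Q = t ^ 2 := by linarith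
  exact ⟨(t - 1).natAbs, by rw [Int.natAbs_sq, hQ]; ring⟩

theorem square_when_m_divides_general
    (q : ℕ)
    (a : ℤ)
    (α β : ℂ) (hsum : α + β = (a : ℂ)) (hprod : α * β = (q : ℂ))
    (m : ℕ) (hm : IsPrimitiveRoot (α / β) m) :
    ∀ n : ℕ, 0 < n → m ∣ n →
      ∃ u : ℕ, (q : ℂ) ^ n + 1 - (α ^ n + β ^ n) = (u : ℂ) ^ 2 := by
  intro n _ hmn
  have hαβ : α ^ n = β ^ n := pow_eq_pow_of_div_pow_eq_one ((hm.pow_eq_one_iff_dvd n).2 hmn)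
  have hs := pow_add_pow_eq_powerSumSeq (q := q) hsum (by exact_mod_cast hprod) n
  have hsq : powerSumSeq a q n ^ 2 = 4 * (q : ℤ) ^ n := by
    have : (α ^ n + β ^ n) ^ 2 = 4 * (α * β) ^ n := by rw [mul_pow, ← hαβ]; ring
    rw [hs, hprod] at this
    exact_mod_cast this
  obtain ⟨u, hu⟩ := Int.exists_add_one_sub_eq_sq_of_sq_eq_four_mul hsq
  exact ⟨u, by rw [hs]; exact_mod_cast hu⟩

theorem square_when_m_divides
    (q : ℕ) (hq : IsPrimePow q) (hq2 : 2 ≤ q)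
    (a : ℤ) (ha : a ^ 2 ≤ 4 * (q : ℤ))
    (α β : ℂ) (hsum : α + β = (a : ℂ)) (hprod : α * β = (q : ℂ))
    (m : ℕ) (hm : IsPrimitiveRoot (α / β) m) :
    ∀ n : ℕ, 0 < n → m ∣ n →
      ∃ u : ℕ, (q : ℂ) ^ n + 1 - (α ^ n + β ^ n) = (u : ℂ) ^ 2 :=
  square_when_m_divides_general q a α β hsum hprod m hm
end

section
/- Let q ≥ 2 be a prime power and a an integer with a² ≤ 4q, and let α, β ∈ ℂ be the two roots of x² − ax + q. If α/β is a root of unity, then there exist infinitely many positive integers n such that q^n + 1 − (α^n + β^n) is the square of an integer. -/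
/-! If `(α / β) ^ k = 1`, then `α ^ (2k) = (α / β) ^ k (α β) ^ k = q ^ k`, and likewise for `β`.
So for every multiple `n` of `2k` we have `α ^ n = β ^ n = q ^ (n / 2)`, and
`q ^ n + 1 - (α ^ n + β ^ n) = (q ^ (n / 2) - 1) ^ 2`. -/

section

variable {K : Type*} [Field K] {x y : K} {k : ℕ}

lemma ne_zero_of_div_pow_eq_one (hk : 0 < k) (h : (x / y) ^ k = 1) : y ≠ 0 := by
  rintro rfl
  simp [hk.ne'] at h

lemma div_pow_eq_one_symm (h : (x / y) ^ k = 1) : (y / x) ^ k = 1 := by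
  rw [← inv_div, inv_pow, h, inv_one]

lemma pow_two_mul_eq_mul_pow_of_div_pow_eq_one (hk : 0 < k) (h : (x / y) ^ k = 1) :
    x ^ (2 * k) = (x * y) ^ k := by
  have hy := ne_zero_of_div_pow_eq_one hk h
  calc x ^ (2 * k) = ((x / y) * (x * y)) ^ k := by
        rw [pow_mul]
        congr 1
        field_simp
    _ = (x * y) ^ k := by rw [mul_pow, h, one_mul]

lemma mul_pow_two_mul_add_one_sub_eq_sq (hk : 0 < k) (h : (x / y) ^ k = 1) :
    (x * y) ^ (2 * k) + 1 - (x ^ (2 * k) + y ^ (2 * k)) = ((x * y) ^ k - 1) ^ 2 := by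
  rw [pow_two_mul_eq_mul_pow_of_div_pow_eq_one hk h,
    pow_two_mul_eq_mul_pow_of_div_pow_eq_one hk (div_pow_eq_one_symm h), mul_comm y x]
  ring

end

theorem infinitely_many_squares_general
    (q : ℕ)
    (α β : ℂ) (hprod : α * β = (q : ℂ))
    (hroot : ∃ k : ℕ, 0 < k ∧ (α / β) ^ k = 1) :
    {n : ℕ | 0 < n ∧ ∃ u : ℤ, (q : ℂ) ^ n + 1 - (α ^ n + β ^ n) = (u : ℂ) ^ 2}.Infinite := by
  obtain ⟨k, hk, hrk⟩ := hroot
  refine Set.infinite_of_injective_forall_mem (f := fun m : ℕ => 2 * (k * (m + 1))) ?_ ?_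
  · intro m n h
    simpa [hk.ne'] using h
  · intro m
    have hN : 0 < k * (m + 1) := by positivity
    refine ⟨by positivity, (q : ℤ) ^ (k * (m + 1)) - 1, ?_⟩
    push_cast
    rw [← hprod]
    exact mul_pow_two_mul_add_one_sub_eq_sq hN (by rw [pow_mul, hrk, one_pow])

theorem infinitely_many_squares
    (q : ℕ) (hq : IsPrimePow q) (hq2 : 2 ≤ q)
    (a : ℤ) (ha : a ^ 2 ≤ 4 * (q : ℤ))
    (α β : ℂ) (hsum : α + β = (a : ℂ)) (hprod : α * β = (q : ℂ))
    (hroot : ∃ k : ℕ, 0 < k ∧ (α / β) ^ k = 1) :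
    {n : ℕ | 0 < n ∧ ∃ u : ℤ, (q : ℂ) ^ n + 1 - (α ^ n + β ^ n) = (u : ℂ) ^ 2}.Infinite :=
  infinitely_many_squares_general q α β hprod hroot
end

section
/- Let q ≥ 2 be a prime power and a an integer with a² ≤ 4q, and let α, β ∈ ℂ be the two roots of x² − ax + q. If α/β is a root of unity, then for every positive integer n divisible by 24, the quantity q^n + 1 − (α^n + β^n) is the square of an integer. -/
theorem square_when_24_divides
    (q : ℕ) (hq : IsPrimePow q) (hq2 : 2 ≤ q)
    (a : ℤ) (ha : a ^ 2 ≤ 4 * (q : ℤ))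
    (α β : ℂ) (hsum : α + β = (a : ℂ)) (hprod : α * β = (q : ℂ))
    (hroot : ∃ k : ℕ, 0 < k ∧ (α / β) ^ k = 1) :
    ∀ n : ℕ, 0 < n → 24 ∣ n →
      ∃ u : ℤ, (q : ℂ) ^ n + 1 - (α ^ n + β ^ n) = (u : ℂ) ^ 2 := by
  obtain ⟨k, hk, hζk⟩ := hroot
  have hqC : (q : ℂ) ≠ 0 := by
    simp only [Ne, Nat.cast_eq_zero]; omega
  have hβ : β ≠ 0 := by
    rintro rfl; rw [mul_zero] at hprod; exact hqC hprod.symm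
  set ζ : ℂ := α / β with hζ
  have hζ0 : ζ ≠ 0 := by
    intro h; rw [h] at hζk; simp [zero_pow hk.ne'] at hζk
  have hα : α ≠ 0 := fun h => hζ0 (by simp [hζ, h])
  -- ζ is integral, and so is its inverse
  have hint : IsIntegral ℤ ζ := by
    refine ⟨Polynomial.X ^ k - Polynomial.C 1, ?_, ?_⟩
    · exact Polynomial.monic_X_pow_sub_C 1 hk.ne'
    · simp [Polynomial.eval₂_sub, hζk]
  have hinv : ζ⁻¹ = ζ ^ (k - 1) := by
    refine (inv_eq_of_mul_eq_one_right ?_)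
    rw [← pow_succ', Nat.sub_add_cancel hk]
    exact hζk
  have hintinv : IsIntegral ℤ ζ⁻¹ := hinv ▸ hint.pow _
  have hintt : IsIntegral ℤ (ζ + ζ⁻¹) := hint.add hintinv
  -- the trace is rational
  have hqQ : (q : ℚ) ≠ 0 := by
    simp only [Ne, Nat.cast_eq_zero]; omega
  set r : ℚ := ((a : ℚ) ^ 2 - 2 * q) / q with hr
  have hrval : ((r : ℚ) : ℂ) = ζ + ζ⁻¹ := by
    rw [hr, hζ]
    push_cast
    rw [inv_div]
    field_simp
    linear_combination (-(α*β) * (α + β + (a:ℂ))) * hsum + (α^2 + β^2 + 2*α*β) * hprod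
  have hintr : IsIntegral ℤ r := by
    have h1 : algebraMap ℚ ℂ r = ζ + ζ⁻¹ := by
      rw [eq_ratCast (algebraMap ℚ ℂ) r]; exact hrval
    have := h1 ▸ hintt
    exact (isIntegral_algebraMap_iff (algebraMap ℚ ℂ).injective).mp this
  obtain ⟨t, ht⟩ := IsIntegrallyClosed.isIntegral_iff.mp hintr
  have htq : (t : ℚ) = r := by exact_mod_cast ht
  have htval : (t : ℤ) * q = a ^ 2 - 2 * q := by
    have : ((t : ℚ)) * q = (a:ℚ)^2 - 2*q := by
      rw [htq, hr]; field_simp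
    exact_mod_cast this
  have hqpos : (0 : ℤ) < q := by exact_mod_cast lt_of_lt_of_le two_pos hq2
  have ht2 : -2 ≤ t ∧ t ≤ 2 := by
    constructor
    · nlinarith [sq_nonneg a]
    · nlinarith
  -- quadratic relation for ζ
  have h2 : ζ ^ 2 + 1 = (t : ℂ) * ζ := by
    have hc : (t : ℂ) = ζ + ζ⁻¹ := by
      rw [← hrval]; exact_mod_cast congrArg (Rat.cast : ℚ → ℂ) htq
    have := congrArg (· * ζ) hc
    simp only [add_mul, inv_mul_cancel₀ hζ0] at this
    rw [this]; ring
  have h12 : ζ ^ 12 = 1 := by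
    obtain ⟨h1, h2'⟩ := ht2
    interval_cases t <;> push_cast at h2
    · -- t = -2 : (ζ+1)^2 = 0
      have : (ζ + 1) ^ 2 = 0 := by linear_combination h2
      have h0 : ζ = -1 := by
        have h1 := pow_eq_zero_iff (n := 2) (by norm_num) |>.mp this
        linear_combination h1
      rw [h0]; norm_num
    · -- t = -1 : ζ^3 = 1
      linear_combination ((ζ-1)*(ζ^9+ζ^6+ζ^3+1)) * h2
    · -- t = 0 : ζ^2 = -1
      linear_combination (ζ^10 - ζ^8 + ζ^6 - ζ^4 + ζ^2 - 1) * h2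
    · -- t = 1
      linear_combination ((ζ+1)*(ζ^3-1)*(ζ^6+1)) * h2
    · -- t = 2 : ζ = 1
      have : (ζ - 1) ^ 2 = 0 := by linear_combination h2
      have hζ1 : ζ = 1 := by
        have h1 := pow_eq_zero_iff (n := 2) (by norm_num) |>.mp this
        linear_combination h1
      rw [hζ1]; norm_num
  intro n hn h24
  obtain ⟨m, rfl⟩ := h24
  have hζn : ζ ^ (24 * m) = 1 := by
    rw [show 24 * m = 12 * (2 * m) by ring, pow_mul, h12, one_pow]
  have hαβ : α ^ (24 * m) = β ^ (24 * m) := by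
    have : (α / β) ^ (24 * m) = 1 := hζn
    rw [div_pow, div_eq_one_iff_eq (pow_ne_zero _ hβ)] at this
    exact this
  have hsq : (α ^ (24 * m)) ^ 2 = ((q : ℂ) ^ (12 * m)) ^ 2 := by
    calc (α ^ (24*m))^2 = α ^ (24*m) * β ^ (24*m) := by rw [← hαβ]; ring
    _ = (α * β) ^ (24*m) := by rw [mul_pow]
    _ = ((q:ℂ)^(12*m))^2 := by rw [hprod, ← pow_mul]; ring_nf
  have hfac : (α ^ (24*m) - (q:ℂ)^(12*m)) * (α ^ (24*m) + (q:ℂ)^(12*m)) = 0 := by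
    linear_combination hsq
  rcases mul_eq_zero.mp hfac with h | h
  · refine ⟨(q : ℤ) ^ (12*m) - 1, ?_⟩
    have hα' : α ^ (24*m) = (q:ℂ)^(12*m) := by linear_combination h
    rw [← hαβ, hα']
    push_cast
    ring
  · refine ⟨(q : ℤ) ^ (12*m) + 1, ?_⟩
    have hα' : α ^ (24*m) = -(q:ℂ)^(12*m) := by linear_combination h
    rw [← hαβ, hα']
    push_cast
    ring
end

section
/- Let a be a nonzero integer, set q = a², and let α, β ∈ ℂ be the two roots of x² − ax + q. Then for every positive integer n divisible by 3, q^n + 1 − (α^n + β^n) = (a^n − (−1)^{n/3})²; in particular it is a perfect square for every such n. -/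
theorem case_m_eq_three
    (a : ℤ) (ha : a ≠ 0)
    (α β : ℂ) (hsum : α + β = (a : ℂ)) (hprod : α * β = ((a : ℂ)) ^ 2) :
    ∀ n : ℕ, 0 < n → 3 ∣ n →
      (((a : ℂ) ^ 2) ^ n + 1 - (α ^ n + β ^ n) = ((a : ℂ) ^ n - (-1 : ℂ) ^ (n / 3)) ^ 2) ∧
      ∃ u : ℤ, ((a : ℂ) ^ 2) ^ n + 1 - (α ^ n + β ^ n) = (u : ℂ) ^ 2 := by
  have hβ : β = (a : ℂ) - α := by linear_combination hsum
  subst hβ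
  have hα3 : α ^ 3 = -((a : ℂ)) ^ 3 := by linear_combination (-(α + (a : ℂ))) * hprod
  have hβ3 : ((a : ℂ) - α) ^ 3 = -((a : ℂ)) ^ 3 := by
    linear_combination (-(2 * (a : ℂ) - α)) * hprod
  rintro n hn ⟨k, rfl⟩
  have hdiv : 3 * k / 3 = k := by omega
  rw [hdiv]
  have h1 : α ^ (3 * k) = (-1 : ℂ) ^ k * ((a : ℂ)) ^ (3 * k) := by
    rw [pow_mul, hα3, neg_pow, ← pow_mul]
  have h2 : ((a : ℂ) - α) ^ (3 * k) = (-1 : ℂ) ^ k * ((a : ℂ)) ^ (3 * k) := by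
    rw [pow_mul, hβ3, neg_pow, ← pow_mul]
  have hk2 : ((-1 : ℂ) ^ k) ^ 2 = 1 := by
    rw [← pow_mul, mul_comm, pow_mul]; norm_num
  constructor
  · rw [h1, h2]; linear_combination (-1 : ℂ) * hk2
  · refine ⟨a ^ (3 * k) - (-1) ^ k, ?_⟩
    rw [h1, h2]
    push_cast
    linear_combination (-1 : ℂ) * hk2
end

section
/- Let q ≥ 2 and a be integers with a² = 2q, and let α, β ∈ ℂ be the two roots of x² − ax + q. Then for every positive integer n divisible by 4, q^n + 1 − (α^n + β^n) = (q^{n/2} − (−1)^{n/4})²; in particular it equals (q^{n/2} − 1)² when n ≡ 0 (mod 8) and (q^{n/2} + 1)² when n ≡ 4 (mod 8). -/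
theorem case_m_eq_four
    (q a : ℤ) (hq : 2 ≤ q) (ha : a ^ 2 = 2 * q)
    (α β : ℂ) (hsum : α + β = (a : ℂ)) (hprod : α * β = (q : ℂ)) :
    ∀ n : ℕ, 0 < n → 4 ∣ n →
      ((q : ℂ) ^ n + 1 - (α ^ n + β ^ n) = ((q : ℂ) ^ (n / 2) - (-1 : ℂ) ^ (n / 4)) ^ 2) ∧
      (n % 8 = 0 → (q : ℂ) ^ n + 1 - (α ^ n + β ^ n) = ((q : ℂ) ^ (n / 2) - 1) ^ 2) ∧
      (n % 8 = 4 → (q : ℂ) ^ n + 1 - (α ^ n + β ^ n) = ((q : ℂ) ^ (n / 2) + 1) ^ 2) := by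
  have hc : ((a : ℂ)) ^ 2 = 2 * (q : ℂ) := by exact_mod_cast congrArg (Int.cast : ℤ → ℂ) ha
  have h1 : α ^ 2 + β ^ 2 = 0 := by
    linear_combination (α + β + (a : ℂ)) * hsum - 2 * hprod + hc
  have hα : α ^ 4 = -(q : ℂ) ^ 2 := by
    linear_combination α ^ 2 * h1 - (α * β + (q : ℂ)) * hprod
  have hβ : β ^ 4 = -(q : ℂ) ^ 2 := by
    linear_combination β ^ 2 * h1 - (α * β + (q : ℂ)) * hprod
  rintro n - ⟨k, rfl⟩
  have h2 : 4 * k / 2 = 2 * k := by omega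
  have h4 : 4 * k / 4 = k := by omega
  rw [h2, h4]
  have hs : ((-1 : ℂ)) ^ k * ((-1 : ℂ)) ^ k = 1 := by
    rw [← pow_add, ← two_mul, pow_mul]; norm_num
  have hQ : (q : ℂ) ^ (4 * k) = ((q : ℂ) ^ (2 * k)) ^ 2 := by
    rw [← pow_mul]; ring_nf
  have hneg : (-(q : ℂ) ^ 2) ^ k = (-1 : ℂ) ^ k * (q : ℂ) ^ (2 * k) := by
    rw [neg_pow, pow_mul]
  have key : (q : ℂ) ^ (4 * k) + 1 - (α ^ (4 * k) + β ^ (4 * k)) =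
      ((q : ℂ) ^ (2 * k) - (-1 : ℂ) ^ k) ^ 2 := by
    rw [pow_mul α 4 k, pow_mul β 4 k, hα, hβ, hneg, hQ]
    linear_combination -hs
  refine ⟨key, ?_, ?_⟩
  · intro h
    have he : Even k := ⟨k / 2, by omega⟩
    rw [key, he.neg_one_pow]
  · intro h
    have ho : Odd k := ⟨k / 2, by omega⟩
    rw [key, ho.neg_one_pow]
    ring
end

section
/- Let q ≥ 2 and a be integers with a² = 3q, and let α, β ∈ ℂ be the two roots of x² − ax + q. Then for every positive integer n divisible by 6, q^n + 1 − (α^n + β^n) = (q^{n/2} − (−1)^{n/6})²; in particular it equals (q^{n/2} − 1)² when n ≡ 0 (mod 12) and (q^{n/2} + 1)² when n ≡ 6 (mod 12). -/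
theorem case_m_eq_six
    (q a : ℤ) (hq : 2 ≤ q) (ha : a ^ 2 = 3 * q)
    (α β : ℂ) (hsum : α + β = (a : ℂ)) (hprod : α * β = (q : ℂ)) :
    ∀ n : ℕ, 0 < n → 6 ∣ n →
      ((q : ℂ) ^ n + 1 - (α ^ n + β ^ n) = ((q : ℂ) ^ (n / 2) - (-1 : ℂ) ^ (n / 6)) ^ 2) ∧
      (n % 12 = 0 → (q : ℂ) ^ n + 1 - (α ^ n + β ^ n) = ((q : ℂ) ^ (n / 2) - 1) ^ 2) ∧
      (n % 12 = 6 → (q : ℂ) ^ n + 1 - (α ^ n + β ^ n) = ((q : ℂ) ^ (n / 2) + 1) ^ 2) := by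
  have haC : (a : ℂ) ^ 2 = 3 * (q : ℂ) := by exact_mod_cast ha
  have h3 : α ^ 3 + β ^ 3 = 0 := by
    have h : α ^ 3 + β ^ 3 = (a : ℂ) ^ 3 - 3 * (q : ℂ) * (a : ℂ) := by
      rw [← hsum, ← hprod]; ring
    rw [h]; linear_combination (a : ℂ) * haC
  have hab : α ^ 3 = -β ^ 3 := eq_neg_of_add_eq_zero_left h3
  have hα6 : α ^ 6 = -(q : ℂ) ^ 3 := by
    calc α ^ 6 = α ^ 3 * α ^ 3 := by ring
      _ = (-β ^ 3) * α ^ 3 := by rw [hab]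
      _ = -(α * β) ^ 3 := by ring
      _ = -(q : ℂ) ^ 3 := by rw [hprod]
  have hβ6 : β ^ 6 = -(q : ℂ) ^ 3 := by
    calc β ^ 6 = β ^ 3 * β ^ 3 := by ring
      _ = (-α ^ 3) * β ^ 3 := by rw [← neg_eq_iff_eq_neg.mpr hab]
      _ = -(α * β) ^ 3 := by ring
      _ = -(q : ℂ) ^ 3 := by rw [hprod]
  intro n hn h6
  obtain ⟨k, rfl⟩ := h6
  have hd2 : 6 * k / 2 = 3 * k := by omega
  have hd6 : 6 * k / 6 = k := by omega
  have hαn : α ^ (6 * k) = (-1 : ℂ) ^ k * (q : ℂ) ^ (3 * k) := by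
    rw [pow_mul, hα6, neg_pow, ← pow_mul]
  have hβn : β ^ (6 * k) = (-1 : ℂ) ^ k * (q : ℂ) ^ (3 * k) := by
    rw [pow_mul, hβ6, neg_pow, ← pow_mul]
  have hsq : ((-1 : ℂ) ^ k) ^ 2 = 1 := by
    rw [← pow_mul, mul_comm, pow_mul]; norm_num
  have hqn : (q : ℂ) ^ (6 * k) = ((q : ℂ) ^ (3 * k)) ^ 2 := by
    rw [← pow_mul]; ring_nf
  have main : (q : ℂ) ^ (6 * k) + 1 - (α ^ (6 * k) + β ^ (6 * k)) =
      ((q : ℂ) ^ (3 * k) - (-1 : ℂ) ^ k) ^ 2 := by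
    rw [hαn, hβn, hqn, sub_sq, hsq]; ring
  refine ⟨by rw [hd2, hd6]; exact main, ?_, ?_⟩
  · intro h12
    have hk : Even k := by refine Nat.even_iff.mpr ?_; omega
    rw [hd2, main, hk.neg_one_pow]
  · intro h12
    have hk : Odd k := by refine Nat.odd_iff.mpr ?_; omega
    rw [hd2, main, hk.neg_one_pow, sub_neg_eq_add]
end

section
/- Let q ≥ 2 be an integer and α, β ∈ ℂ with αβ = q and |α| = |β| = √q. Let n ≥ 30 be an integer and set w = (1 − α^n − β^n)/q^n. Then |Σ_{r=1}^{∞} C(1/2, r) w^r| < 0.0003 and |Σ_{r=2}^{∞} C(1/2, r) w^r| < 4.001/q^n, where C(1/2, r) = (1/2)(1/2 − 1)···(1/2 − r + 1)/r! denotes the generalized binomial coefficient (both series converge absolutely since |w| < 1). -/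
noncomputable def binomialHalf (r : ℕ) : ℂ :=
  (∏ i ∈ Finset.range r, ((1 : ℂ) / 2 - (i : ℂ))) / (r.factorial : ℂ)

/-! Since `|1/2 - i| ≤ i + 1`, every coefficient `C(1/2, r)` has modulus at most one, so both
tails are dominated by geometric series in `|w|`: they are at most `|w| / (1 - |w|)` and
`|w|² / (1 - |w|)`. With `s = √q ^ n ≥ 2 ^ 15` one has `q ^ n = s²` and
`|w| ≤ (1 + 2 s) / s²`, which makes `|w| ≤ 1/8192` and `|w|² ≈ 4 / q ^ n`. -/

lemma norm_binomialHalf_le_one (r : ℕ) : ‖binomialHalf r‖ ≤ 1 := by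
  have hfac : (0 : ℝ) < r.factorial := mod_cast r.factorial_pos
  rw [binomialHalf, norm_div, norm_prod, Complex.norm_natCast, div_le_one hfac,
    ← Finset.prod_range_add_one_eq_factorial, Nat.cast_prod]
  gcongr with i
  calc ‖(1 : ℂ) / 2 - i‖ ≤ ‖(1 : ℂ) / 2‖ + ‖(i : ℂ)‖ := norm_sub_le _ _
    _ ≤ (i + 1 : ℕ) := by push_cast; norm_num; linarith

section GeometricTail

variable {𝕜 : Type*} [NormedDivisionRing 𝕜]
  {c : ℕ → 𝕜} {w : 𝕜}

lemma summable_norm_shift_of_norm_le_one (hc : ∀ r, ‖c r‖ ≤ 1) (hw : ‖w‖ < 1) (k : ℕ) :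
    Summable (fun r ↦ ‖c (r + k) * w ^ (r + k)‖) := by
  refine .of_nonneg_of_le (fun _ ↦ norm_nonneg _) (fun r ↦ ?_)
    (summable_nat_add_iff k |>.mpr (summable_geometric_of_lt_one (norm_nonneg w) hw))
  rw [norm_mul, norm_pow]
  exact mul_le_of_le_one_left (by positivity) (hc _)

lemma norm_tsum_shift_le_of_norm_le_one (hc : ∀ r, ‖c r‖ ≤ 1) (hw : ‖w‖ < 1) (k : ℕ) :
    ‖∑' r, c (r + k) * w ^ (r + k)‖ ≤ ‖w‖ ^ k / (1 - ‖w‖) := by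
  have hgeom := summable_geometric_of_lt_one (norm_nonneg w) hw
  calc ‖∑' r, c (r + k) * w ^ (r + k)‖
      ≤ ∑' r, ‖c (r + k) * w ^ (r + k)‖ :=
        norm_tsum_le_tsum_norm (summable_norm_shift_of_norm_le_one hc hw k)
    _ ≤ ∑' r, ‖w‖ ^ r * ‖w‖ ^ k := by
        refine (summable_norm_shift_of_norm_le_one hc hw k).tsum_le_tsum (fun r ↦ ?_)
          (hgeom.mul_right _)
        rw [norm_mul, norm_pow, ← pow_add]
        exact mul_le_of_le_one_left (by positivity) (hc _)
    _ = ‖w‖ ^ k / (1 - ‖w‖) := by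
        rw [tsum_mul_right, tsum_geometric_of_lt_one (norm_nonneg w) hw, inv_mul_eq_div]

lemma norm_one_sub_pow_sub_pow_le {α β : 𝕜} {ρ : ℝ} (hα : ‖α‖ = ρ) (hβ : ‖β‖ = ρ) (n : ℕ) :
    ‖1 - α ^ n - β ^ n‖ ≤ 1 + 2 * ρ ^ n := by
  calc ‖1 - α ^ n - β ^ n‖ ≤ ‖(1 : 𝕜)‖ + ‖α ^ n‖ + ‖β ^ n‖ := by
        linarith [norm_sub_le (1 - α ^ n) (β ^ n), norm_sub_le (1 : 𝕜) (α ^ n)]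
    _ = 1 + 2 * ρ ^ n := by rw [norm_one, norm_pow, norm_pow, hα, hβ]; ring

end GeometricTail

lemma pow_fifteen_le_sqrt_pow {Q : ℝ} (hQ : 2 ≤ Q) {n : ℕ} (hn : 30 ≤ n) :
    (2 : ℝ) ^ 15 ≤ √Q ^ n :=
  calc (2 : ℝ) ^ 15 ≤ Q ^ 15 := by gcongr
    _ = √Q ^ 30 := by rw [show 30 = 2 * 15 from rfl, pow_mul, Real.sq_sqrt (by linarith)]
    _ ≤ √Q ^ n := pow_le_pow_right₀ (Real.le_sqrt_of_sq_le (by linarith)) hn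

lemma tail_ratio_bounds {s A : ℝ} (hs : 2 ^ 15 ≤ s) (hA0 : 0 ≤ A) (hA : A * s ^ 2 ≤ 1 + 2 * s) :
    A < 1 ∧ A ^ 1 / (1 - A) < 0.0003 ∧ A ^ 2 / (1 - A) < 4.001 / s ^ 2 := by
  have hs0 : 0 < s := by linarith
  have hAs : A * s ≤ 2 + 1 / 2 ^ 15 := by
    have : A * s ≤ 2 + 1 / s := by
      rw [← mul_le_mul_iff_left₀ hs0]; field_simp; nlinarith
    linarith [one_div_le_one_div_of_le (by norm_num) hs]
  have hA_small : A ≤ 1 / 8192 := by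
    rw [le_div_iff₀ (by norm_num)]; nlinarith
  refine ⟨by linarith, ?_, ?_⟩
  · rw [pow_one, div_lt_iff₀ (by linarith)]; linarith
  · rw [div_lt_div_iff₀ (by linarith) (by positivity)]
    nlinarith [mul_self_le_mul_self (by positivity) hAs]

theorem tail_sum_bounds_general
    (q : ℤ) (hq : 2 ≤ q)
    (α β : ℂ)
    (hα : ‖α‖ = Real.sqrt q) (hβ : ‖β‖ = Real.sqrt q)
    (n : ℕ) (hn : 30 ≤ n) :
    Summable (fun r : ℕ =>
      binomialHalf (r + 1) * ((1 - α ^ n - β ^ n) / (q : ℂ) ^ n) ^ (r + 1)) ∧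
    ‖∑' r : ℕ,
      binomialHalf (r + 1) * ((1 - α ^ n - β ^ n) / (q : ℂ) ^ n) ^ (r + 1)‖ < 0.0003 ∧
    Summable (fun r : ℕ =>
      binomialHalf (r + 2) * ((1 - α ^ n - β ^ n) / (q : ℂ) ^ n) ^ (r + 2)) ∧
    ‖∑' r : ℕ,
      binomialHalf (r + 2) * ((1 - α ^ n - β ^ n) / (q : ℂ) ^ n) ^ (r + 2)‖
      < 4.001 / (q : ℝ) ^ n := by
  set w : ℂ := (1 - α ^ n - β ^ n) / (q : ℂ) ^ n
  have hq' : (2 : ℝ) ≤ q := mod_cast hq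
  have hqn : (q : ℝ) ^ n = (√q ^ n) ^ 2 := by
    rw [← pow_mul, mul_comm, pow_mul, Real.sq_sqrt (by linarith)]
  have hw : ‖w‖ * (√q ^ n) ^ 2 ≤ 1 + 2 * √q ^ n := by
    have hqn0 : (0 : ℝ) < q ^ n := by positivity
    rw [← hqn, norm_div, norm_pow, Complex.norm_intCast, abs_of_pos (by linarith),
      div_mul_cancel₀ _ hqn0.ne']
    exact norm_one_sub_pow_sub_pow_le hα hβ n
  obtain ⟨hw1, hbound1, hbound2⟩ :=
    tail_ratio_bounds (pow_fifteen_le_sqrt_pow hq' hn) (norm_nonneg w) hw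
  have hsum k := (summable_norm_shift_of_norm_le_one norm_binomialHalf_le_one hw1 k).of_norm
  have htail k := norm_tsum_shift_le_of_norm_le_one norm_binomialHalf_le_one hw1 k
  exact ⟨hsum 1, (htail 1).trans_lt hbound1, hsum 2, hqn ▸ (htail 2).trans_lt hbound2⟩

theorem tail_sum_bounds
    (q : ℤ) (hq : 2 ≤ q)
    (α β : ℂ) (hprod : α * β = (q : ℂ))
    (hα : ‖α‖ = Real.sqrt q) (hβ : ‖β‖ = Real.sqrt q)
    (n : ℕ) (hn : 30 ≤ n) :
    Summable (fun r : ℕ =>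
      binomialHalf (r + 1) * ((1 - α ^ n - β ^ n) / (q : ℂ) ^ n) ^ (r + 1)) ∧
    ‖∑' r : ℕ,
      binomialHalf (r + 1) * ((1 - α ^ n - β ^ n) / (q : ℂ) ^ n) ^ (r + 1)‖ < 0.0003 ∧
    Summable (fun r : ℕ =>
      binomialHalf (r + 2) * ((1 - α ^ n - β ^ n) / (q : ℂ) ^ n) ^ (r + 2)) ∧
    ‖∑' r : ℕ,
      binomialHalf (r + 2) * ((1 - α ^ n - β ^ n) / (q : ℂ) ^ n) ^ (r + 2)‖
      < 4.001 / (q : ℝ) ^ n :=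
  tail_sum_bounds_general q hq α β hα hβ n hn
end

section
/- Let q ≥ 2 be an integer and a an integer with a² ≤ 4q, and let α, β ∈ ℂ be the two roots of x² − ax + q. Let n ≥ 30 be an integer and suppose u is a nonnegative integer with u² = q^n + 1 − (α^n + β^n). Then |u·q^{n/2} − q^n + α^n/2 + β^n/2| < 4.6. -/
/-!
Put `A = √q ^ n` and `S = αⁿ + βⁿ`. Since `|α| = |β| = √q`, the real number `S` satisfies
`|S| ≤ 2A`, so `u² = A² + 1 - S` lies between `(A - 1)²` and `(A + 1)²`, i.e. `|u - A| ≤ 1`.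
The quantity to bound is `L = uA - A² + S/2`, and `L (u + A) = A + S (u - A)/2`, whose absolute
value is at most `2A ≤ 2 (u + A)`; hence `|L| ≤ 2`.
-/

theorem Complex.norm_eq_sqrt_of_sq_sub_mul_add_eq_zero {a q : ℝ} (hdisc : a ^ 2 ≤ 4 * q)
    {z : ℂ} (hz : z ^ 2 - a * z + q = 0) : ‖z‖ = √q := by
  have hre : z.re ^ 2 - z.im ^ 2 - a * z.re + q = 0 := by
    simpa [pow_two] using congrArg Complex.re hz
  have him : z.im * (2 * z.re - a) = 0 := by
    have := congrArg Complex.im hz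
    simp only [pow_two, sub_im, add_im, mul_im, ofReal_re, ofReal_im, zero_im] at this
    linear_combination this
  have hre_half : 2 * z.re - a = 0 := by
    rcases mul_eq_zero.mp him with him0 | h
    · -- a real root forces a vanishing discriminant
      have hsq : (2 * z.re - a) ^ 2 = a ^ 2 - 4 * q := by
        linear_combination 4 * hre + 4 * z.im * him0
      exact pow_eq_zero_iff two_ne_zero |>.mp (le_antisymm (by linarith) (sq_nonneg _))
    · exact h
  rw [norm_def, normSq_apply]
  congr 1
  linear_combination -hre + z.re * hre_half

theorem abs_mul_sub_sq_add_half_le_two {A S u : ℝ} (hA : 0 ≤ A) (hS : |S| ≤ 2 * A)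
    (hu : 0 ≤ u) (hu_sq : u ^ 2 = A ^ 2 + 1 - S) : |u * A - A ^ 2 + S / 2| ≤ 2 := by
  obtain ⟨hS_lower, hS_upper⟩ := abs_le.mp hS
  have hu_le : u ≤ A + 1 := by nlinarith
  have hu_ge : A - 1 ≤ u := by nlinarith
  have hu_ge_one_sub : 1 - A ≤ u := by nlinarith
  have hpos : 0 < u + A := by linarith
  have hdist : |u - A| ≤ 1 := abs_sub_le_iff.mpr ⟨by linarith, by linarith⟩
  have hkey : (u * A - A ^ 2 + S / 2) * (u + A) = A + S * (u - A) / 2 := by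
    linear_combination A * hu_sq
  have hcross : |S * (u - A)| ≤ 2 * A := by
    rw [abs_mul]
    nlinarith [abs_nonneg S, abs_nonneg (u - A)]
  refine le_of_mul_le_mul_right ?_ hpos
  calc |u * A - A ^ 2 + S / 2| * (u + A)
      = |A + S * (u - A) / 2| := by rw [← hkey, abs_mul, abs_of_pos hpos]
    _ ≤ |A| + |S * (u - A)| / 2 := (abs_add_le _ _).trans_eq (by rw [abs_div, abs_two])
    _ ≤ 2 * (u + A) := by rw [abs_of_nonneg hA]; linarith

theorem norm_pow_add_pow_le {R : Type*} [SeminormedRing R] [NormOneClass R] {x y : R} {r : ℝ}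
    (hx : ‖x‖ ≤ r) (hy : ‖y‖ ≤ r) (n : ℕ) : ‖x ^ n + y ^ n‖ ≤ 2 * r ^ n := by
  have hxn : ‖x ^ n‖ ≤ r ^ n := (norm_pow_le x n).trans (pow_le_pow_left₀ (norm_nonneg x) hx n)
  have hyn : ‖y ^ n‖ ≤ r ^ n := (norm_pow_le y n).trans (pow_le_pow_left₀ (norm_nonneg y) hy n)
  linarith [norm_add_le (x ^ n) (y ^ n)]

theorem linear_form_small_general
    (q a : ℤ) (ha : a ^ 2 ≤ 4 * q)
    (α β : ℂ) (hsum : α + β = (a : ℂ)) (hprod : α * β = (q : ℂ))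
    (n : ℕ)
    (u : ℕ) (hu : (u : ℂ) ^ 2 = (q : ℂ) ^ n + 1 - (α ^ n + β ^ n)) :
    ‖(u : ℂ) * ((Real.sqrt q : ℝ) : ℂ) ^ n - (q : ℂ) ^ n
      + α ^ n / 2 + β ^ n / 2‖ < 4.6 := by
  have hq : (0 : ℝ) ≤ q := Int.cast_nonneg_iff.mpr (by nlinarith [sq_nonneg a])
  have hdisc : (a : ℝ) ^ 2 ≤ 4 * q := by exact_mod_cast ha
  have hnorm_α : ‖α‖ = √q := Complex.norm_eq_sqrt_of_sq_sub_mul_add_eq_zero hdisc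
    (by push_cast; linear_combination α * hsum - hprod)
  have hnorm_β : ‖β‖ = √q := Complex.norm_eq_sqrt_of_sq_sub_mul_add_eq_zero hdisc
    (by push_cast; linear_combination β * hsum - hprod)
  set A : ℝ := √q ^ n
  have hA_sq : A ^ 2 = (q : ℝ) ^ n := by rw [← pow_mul, mul_comm, pow_mul, Real.sq_sqrt hq]
  set S : ℝ := (q : ℝ) ^ n + 1 - (u : ℝ) ^ 2
  have hS : α ^ n + β ^ n = (S : ℂ) := by push_cast [S]; linear_combination hu
  have hS_le : |S| ≤ 2 * A := by
    rw [← Real.norm_eq_abs, ← Complex.norm_real, ← hS]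
    exact norm_pow_add_pow_le hnorm_α.le hnorm_β.le n
  have hreal : (u : ℂ) * ((√q : ℝ) : ℂ) ^ n - (q : ℂ) ^ n + α ^ n / 2 + β ^ n / 2
      = ((u * A - A ^ 2 + S / 2 : ℝ) : ℂ) := by
    rw [hA_sq]; push_cast [A]; linear_combination hS / 2
  rw [hreal, Complex.norm_real, Real.norm_eq_abs]
  have hbound := abs_mul_sub_sq_add_half_le_two (by positivity) hS_le u.cast_nonneg
    (by rw [hA_sq]; ring)
  linarith

theorem linear_form_small
    (q a : ℤ) (hq : 2 ≤ q) (ha : a ^ 2 ≤ 4 * q)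
    (α β : ℂ) (hsum : α + β = (a : ℂ)) (hprod : α * β = (q : ℂ))
    (n : ℕ) (hn : 30 ≤ n)
    (u : ℕ) (hu : (u : ℂ) ^ 2 = (q : ℂ) ^ n + 1 - (α ^ n + β ^ n)) :
    ‖(u : ℂ) * ((Real.sqrt q : ℝ) : ℂ) ^ n - (q : ℂ) ^ n
      + α ^ n / 2 + β ^ n / 2‖ < 4.6 :=
  linear_form_small_general q a ha α β hsum hprod n u hu
end

section
/- Let p be a prime number and k ≥ 1 an integer. If p^k + 1 is the square of an integer, then p^k = 3 or p^k = 8. -/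
theorem prime_power_plus_one_square
    (p : ℕ) (hp : p.Prime) (k : ℕ) (hk : 1 ≤ k)
    (h : ∃ u : ℕ, p ^ k + 1 = u ^ 2) :
    p ^ k = 3 ∨ p ^ k = 8 := by
  obtain ⟨u, hu⟩ := h
  have hp2 : 2 ≤ p := hp.two_le
  have hpk : 2 ≤ p ^ k := by
    calc 2 = 2 ^ 1 := rfl
    _ ≤ p ^ 1 := Nat.pow_le_pow_left hp2 1
    _ ≤ p ^ k := Nat.pow_le_pow_right (by omega) hk
  have hu2 : 2 ≤ u := by nlinarith
  obtain ⟨v, rfl⟩ : ∃ v, u = v + 1 := ⟨u - 1, by omega⟩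
  have hv : p ^ k = v * (v + 2) := by nlinarith
  have hv1 : 1 ≤ v := by nlinarith
  have hdv : v ∣ p ^ k := ⟨v + 2, hv⟩
  have hdv2 : (v + 2) ∣ p ^ k := Dvd.intro_left v hv.symm
  obtain ⟨a, ha, hva⟩ := (Nat.dvd_prime_pow hp).mp hdv
  obtain ⟨b, hb, hvb⟩ := (Nat.dvd_prime_pow hp).mp hdv2
  rcases Nat.eq_zero_or_pos a with h0 | hpos
  · subst h0
    simp only [pow_zero] at hva
    subst hva
    left; omega
  · have hpv : p ∣ v := hva ▸ dvd_pow_self p hpos.ne'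
    have hbpos : 1 ≤ b := by
      rcases Nat.eq_zero_or_pos b with h0 | h1
      · subst h0; simp only [pow_zero] at hvb; omega
      · exact h1
    have hpv2 : p ∣ v + 2 := hvb ▸ dvd_pow_self p (by omega : b ≠ 0)
    have hpd2 : p ∣ 2 := by simpa using Nat.dvd_sub hpv2 hpv
    have hpe : p = 2 := by
      have := Nat.le_of_dvd (by norm_num) hpd2; omega
    subst hpe
    -- v = 2^a, v+2 = 2^b
    rcases Nat.lt_or_ge a 2 with ha2 | ha2
    · -- a = 1, so v = 2, v + 2 = 4
      have hva' : v = 2 := by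
        have : a = 1 := by omega
        rw [this, pow_one] at hva; omega
      subst hva'
      right; omega
    · -- a ≥ 2 : 4 ∣ v and 4 ∣ v + 2, contradiction
      have h4v : 4 ∣ v := by
        rw [hva]; exact (by norm_num : (4:ℕ) = 2 ^ 2) ▸ pow_dvd_pow 2 ha2
      have hvge : 4 ≤ v := Nat.le_of_dvd (by omega) h4v
      have hb2 : 2 ≤ b := by
        by_contra hc
        interval_cases b <;> simp_all
      have h4v2 : 4 ∣ v + 2 := by
        rw [hvb]; exact (by norm_num : (4:ℕ) = 2 ^ 2) ▸ pow_dvd_pow 2 hb2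
      omega
end

section
/- Let N be an odd positive integer. Then 2^N − 2^{(N+1)/2} + 1 is the square of an integer if and only if N ∈ {1, 5}, and 2^N + 2^{(N+1)/2} + 1 is never the square of an integer. -/
lemma not_sq_aux (c b : ℤ) (hb : 0 ≤ b) (hlt : b ^ 2 < c) (hlt2 : c < (b + 1) ^ 2)
    (u : ℤ) (h : u ^ 2 = c) : False := by
  have h1 : u ≤ b := by nlinarith [sq_nonneg (u - (b + 1))]
  have h2 : -b ≤ u := by nlinarith [sq_nonneg (u + (b + 1))]
  nlinarith [mul_nonneg (by linarith : (0:ℤ) ≤ b - u) (by linarith : (0:ℤ) ≤ b + u)]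

lemma key (m : ℕ) (hm : 4 ≤ m) (ε : ℤ) (hε : ε = 1 ∨ ε = -1)
    (u : ℤ) (h : u ^ 2 = 2 ^ (2 * m - 1) + ε * 2 ^ m + 1) : False := by
  have hε1 : ε ≤ 1 := by rcases hε with rfl | rfl <;> norm_num
  have hε2 : -1 ≤ ε := by rcases hε with rfl | rfl <;> norm_num
  set P : ℤ := 2 ^ (m - 2) with hPdef
  have hP : (0:ℤ) < P := by positivity
  have hP4 : (4:ℤ) ≤ P := by
    calc (4:ℤ) = 2 ^ 2 := by norm_num
    _ ≤ 2 ^ (m - 2) := pow_le_pow_right₀ (by norm_num) (by omega)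
  have hm' : (2:ℤ) ^ m = 4 * P := by
    rw [show m = m - 2 + 2 by omega, pow_add, ← hPdef]; ring
  have h2m : (2:ℤ) ^ (2 * m - 1) = 8 * P ^ 2 := by
    rw [show 2 * m - 1 = (m - 2) + (m - 2) + 3 by omega, pow_add, pow_add, ← hPdef]; ring
  obtain ⟨v, hv, hv0⟩ : ∃ v : ℤ, v ^ 2 = u ^ 2 ∧ 0 ≤ v := ⟨|u|, sq_abs u, abs_nonneg u⟩
  have hvodd : Odd v := by
    have hoddsq : Odd (v ^ 2) := by
      rw [hv, h, hm', h2m]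
      have heq : 8 * P ^ 2 + ε * (4 * P) + 1 = 2 * (4 * P ^ 2 + ε * (2 * P)) + 1 := by ring
      rw [heq]
      exact odd_two_mul_add_one _
    rcases Int.even_or_odd v with he | ho
    · exfalso
      obtain ⟨j, hj⟩ := he
      obtain ⟨w, hw⟩ := hoddsq
      have h2 : 4 * (j ^ 2) = 2 * w + 1 := by linear_combination hw - (v + 2 * j) * hj
      obtain ⟨J, hJ⟩ : ∃ J : ℤ, J = j ^ 2 := ⟨_, rfl⟩
      rw [← hJ] at h2
      omega
    · exact ho
  clear_value P
  obtain ⟨s, hs⟩ := hvodd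
  have hs0 : 0 ≤ s := by omega
  have hveq : (2 * s + 1) ^ 2 = 8 * P ^ 2 + ε * (4 * P) + 1 := by
    rw [← hs, hv, h, h2m, hm']
  have hkey : s * (s + 1) = P * (2 * P + ε) := by
    have h4 : 4 * (s * (s + 1)) = 4 * (P * (2 * P + ε)) := by linear_combination hveq
    exact mul_left_cancel₀ (by norm_num) h4
  have hs1 : 1 ≤ s := by
    nlinarith [hkey, mul_pos hP hP, mul_nonneg (by linarith : (0:ℤ) ≤ ε + 1) hP.le, hs0, hP4]
  have hPd : P ∣ s * (s + 1) := ⟨2 * P + ε, hkey⟩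
  rcases Int.even_or_odd s with hse | hso
  · -- s even, so P ∣ s
    have hcop : IsCoprime (2:ℤ) (s + 1) := by
      obtain ⟨j, hj⟩ := hse
      exact ⟨-j, 1, by rw [hj]; ring⟩
    have hcopP : IsCoprime P (s + 1) := by rw [hPdef]; exact hcop.pow_left
    obtain ⟨a, ha⟩ : P ∣ s := hcopP.dvd_of_dvd_mul_right hPd
    subst ha
    have ha' : P * a ^ 2 + a = 2 * P + ε := by
      have h4 : P * (a * (P * a + 1)) = P * (2 * P + ε) := by linear_combination hkey
      have h5 := mul_left_cancel₀ hP.ne' h4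
      linear_combination h5
    have ha1 : 1 ≤ a := by nlinarith [hs1, hP]
    rcases eq_or_lt_of_le ha1 with rfl | ha2
    · nlinarith [ha', hP4, hε1]
    · have h4a : 4 ≤ a ^ 2 := by nlinarith
      have hmul : P * 4 ≤ P * a ^ 2 := mul_le_mul_of_nonneg_left h4a hP.le
      nlinarith [ha', hmul, hP4, hε1]
  · -- s odd, so P ∣ s + 1
    have hcop : IsCoprime (2:ℤ) s := by
      obtain ⟨j, hj⟩ := hso
      exact ⟨-j, 1, by rw [hj]; ring⟩
    have hcopP : IsCoprime P s := by rw [hPdef]; exact hcop.pow_left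
    obtain ⟨a, ha⟩ : P ∣ s + 1 := hcopP.dvd_of_dvd_mul_left hPd
    have hs' : s = P * a - 1 := by linarith [ha]
    rw [hs'] at hkey
    have ha' : P * a ^ 2 - a = 2 * P + ε := by
      have h4 : P * (a * (P * a - 1)) = P * (2 * P + ε) := by linear_combination hkey
      have h5 := mul_left_cancel₀ hP.ne' h4
      linear_combination h5
    have hPa : 2 ≤ P * a := by rw [← ha]; linarith
    have ha1 : 1 ≤ a := by nlinarith [hPa, hP]
    rcases eq_or_lt_of_le ha1 with rfl | ha2
    · linarith [ha', hP4, hε2]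
    · have h2a : 2 ≤ a := ha2
      have hsq : 2 * 2 ≤ a * a :=
        mul_le_mul h2a h2a (by norm_num) (by linarith)
      have h4a : (0:ℤ) ≤ a ^ 2 - 2 := by linarith [hsq, pow_two a]
      have hmul2 : 4 * (a ^ 2 - 2) ≤ P * (a ^ 2 - 2) := mul_le_mul_of_nonneg_right hP4 h4a
      have haux : (0:ℤ) ≤ (a - 2) * (4 * a + 7) :=
        mul_nonneg (by linarith) (by linarith)
      linarith [ha', hmul2, hε1, haux]

theorem szalay_two
    (N : ℕ) (hN : 0 < N) (hodd : Odd N) :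
    ((∃ u : ℤ, (2 : ℤ) ^ N - 2 ^ ((N + 1) / 2) + 1 = u ^ 2) ↔ N = 1 ∨ N = 5) ∧
    (¬ ∃ u : ℤ, (2 : ℤ) ^ N + 2 ^ ((N + 1) / 2) + 1 = u ^ 2) := by
  obtain ⟨m, hm1, hm2, hm3⟩ : ∃ m, N = 2 * m - 1 ∧ (N + 1) / 2 = m ∧ 1 ≤ m := by
    obtain ⟨k, hk⟩ := hodd
    exact ⟨k + 1, by omega, by omega, by omega⟩
  rw [hm2, hm1]
  refine ⟨⟨?_, ?_⟩, ?_⟩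
  · rintro ⟨u, hu⟩
    rcases le_or_gt 4 m with h4 | h4
    · exact (key m h4 (-1) (Or.inr rfl) u (by linear_combination -hu)).elim
    · interval_cases m
      · omega
      · exfalso
        norm_num at hu
        exact not_sq_aux 5 2 (by norm_num) (by norm_num) (by norm_num) u (by linarith)
      · omega
  · rintro (h1 | h5)
    · have hm : m = 1 := by omega
      subst hm
      exact ⟨1, by norm_num⟩
    · have hm : m = 3 := by omega
      subst hm
      exact ⟨5, by norm_num⟩
  · rintro ⟨u, hu⟩
    rcases le_or_gt 4 m with h4 | h4
    · exact key m h4 1 (Or.inl rfl) u (by linear_combination -hu)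
    · interval_cases m
      · norm_num at hu
        exact not_sq_aux 5 2 (by norm_num) (by norm_num) (by norm_num) u (by linarith)
      · norm_num at hu
        exact not_sq_aux 13 3 (by norm_num) (by norm_num) (by norm_num) u (by linarith)
      · norm_num at hu
        exact not_sq_aux 41 6 (by norm_num) (by norm_num) (by norm_num) u (by linarith)
end

section
/- Let N be an odd positive integer. Then 3^N − 3^{(N+1)/2} + 1 is the square of an integer if and only if N = 1, and 3^N + 3^{(N+1)/2} + 1 is never the square of an integer. -/
lemma luca_key (t : ℕ) (ht : 1 ≤ t) (e : ℤ) (he : e = 1 ∨ e = -1) (u : ℤ)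
    (h : (3:ℤ) ^ (2*t+1) + e * 3 ^ (t+1) + 1 = u ^ 2) : False := by
  set A : ℤ := 3 ^ t with hA
  have hA3 : (3:ℤ) ≤ A := by
    calc (3:ℤ) = 3^1 := by norm_num
    _ ≤ 3^t := pow_le_pow_right₀ (by norm_num) ht
  have h2 : (3:ℤ) ^ (2*t+1) = 3 * A^2 := by
    rw [hA, ← pow_mul, pow_succ]; ring
  have h3 : (3:ℤ) ^ (t+1) = 3 * A := by rw [hA, pow_succ]; ring
  rw [h2, h3] at h
  have hdvd : (3:ℤ) ^ (t+1) ∣ (u-1)*(u+1) := ⟨A + e, by rw [h3]; linear_combination -h⟩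
  have hp : Prime (3:ℤ) := Int.prime_three
  have key : ∃ s v : ℤ, (s = 1 ∨ s = -1) ∧ u = 3*A*v + s := by
    by_cases h3u : (3:ℤ) ∣ (u - 1)
    · have hnot : ¬ (3:ℤ) ∣ (u + 1) := by
        intro hc; omega
      have := hp.pow_dvd_of_dvd_mul_right (t+1) hnot hdvd
      obtain ⟨v, hv⟩ := this
      exact ⟨1, v, Or.inl rfl, by rw [h3] at hv; linarith⟩
    · rw [mul_comm] at hdvd
      have := hp.pow_dvd_of_dvd_mul_right (t+1) h3u hdvd
      obtain ⟨v, hv⟩ := this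
      exact ⟨-1, v, Or.inr rfl, by rw [h3] at hv; linarith⟩
  obtain ⟨s, v, hs, hu⟩ := key
  have hs2 : s^2 = 1 := by rcases hs with rfl | rfl <;> norm_num
  have hkey : A + e = 3*A*v^2 + 2*s*v := by
    have h3A : (3*A:ℤ) ≠ 0 := by positivity
    apply mul_left_cancel₀ h3A
    subst hu
    linear_combination h + hs2
  have hv2 : v = 0 ∨ 1 ≤ v^2 := by
    rcases eq_or_ne v 0 with h | h
    · exact Or.inl h
    · right
      have := Int.one_le_abs h
      nlinarith [sq_abs v]
  rcases hv2 with rfl | hv2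
  · rcases he with rfl | rfl <;> simp at hkey <;> linarith
  · have hmul : 0 ≤ (3*A - 2) * (v^2 - 1) := by
      apply mul_nonneg <;> linarith
    rcases hs with rfl | rfl <;> rcases he with rfl | rfl <;>
      nlinarith [sq_nonneg (v-1), sq_nonneg (v+1)]

theorem luca_three
    (N : ℕ) (hN : 0 < N) (hodd : Odd N) :
    ((∃ u : ℤ, (3 : ℤ) ^ N - 3 ^ ((N + 1) / 2) + 1 = u ^ 2) ↔ N = 1) ∧
    (¬ ∃ u : ℤ, (3 : ℤ) ^ N + 3 ^ ((N + 1) / 2) + 1 = u ^ 2) := by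
  obtain ⟨t, rfl⟩ := hodd
  have hhalf : (2*t+1+1)/2 = t+1 := by omega
  rw [hhalf]
  rcases Nat.eq_zero_or_pos t with rfl | ht
  · constructor
    · constructor
      · intro _; norm_num
      · intro _; exact ⟨1, by norm_num⟩
    · rintro ⟨u, hu⟩
      norm_num at hu
      have h1 : -3 < u := by nlinarith
      have h2 : u < 3 := by nlinarith
      interval_cases u <;> omega
  · constructor
    · constructor
      · rintro ⟨u, hu⟩
        exact absurd (luca_key t ht (-1) (Or.inr rfl) u (by linear_combination hu)) (by simp)
      · intro h; omega
    · rintro ⟨u, hu⟩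
      exact luca_key t ht 1 (Or.inl rfl) u (by linear_combination hu)
end
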